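/- Lipschitz parameterization of Gradient Bandit: Let ε ∈ (0, 1), R > 0, T_ε = min( ⌊ log(√(1/(Kε))) · √n / R ⌋, n ), and L_ε = (√2 / (R ε)) · log(√(1/(Kε))) / √(Kε). Then for all parameters θ, δ ∈ [0, R] and all t ≤ T_ε, sup_{a ∈ [K]} | log( π_t^δ(a) / π_t^θ(a) ) | ≤ L_ε |δ − θ|, where both probability sequences are computed from the same sequences of rewards in [0,1] and actions in [K]. -/

import Mathlib

/-- Softmax distribution associated with a score vector. -/
noncomputable def softmax {ι : Type*} [Fintype ι] (h : ι → ℝ) (a : ι) : ℝ :=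
  Real.exp (h a) / ∑ b, Real.exp (h b)

/-- Cumulative estimated rewards `G t b = Σ_{s=1}^t ĝ_{b,s}` of the
`Gradient Bandit` algorithm with learning rate `θ/√n`, where
`ĝ_{b,s} = (1{A_s = b} − π_s(b)) g_{A_s,s}`. -/
noncomputable def gradBanditG (n K : ℕ) (g : Fin K → ℕ → ℝ) (A : ℕ → Fin K)
    (θ : ℝ) : ℕ → Fin K → ℝ
  | 0 => fun _ => 0
  | (t + 1) => fun b =>
      gradBanditG n K g A θ t b +
        ((if A (t + 1) = b then 1 else 0) -
            softmax (fun c => -(θ / Real.sqrt n) * gradBanditG n K g A θ t c) b) *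
          g (A (t + 1)) (t + 1)

/-- The `Gradient Bandit` action probabilities: `π_1` is uniform and
`π_{t+1} = softmax(−(θ/√n) Σ_{s≤t} ĝ_{·,s})`. -/
noncomputable def gradBanditPi (n K : ℕ) (g : Fin K → ℕ → ℝ) (A : ℕ → Fin K)
    (θ : ℝ) (t : ℕ) : Fin K → ℝ :=
  softmax (fun c => -(θ / Real.sqrt n) * gradBanditG n K g A θ (t - 1) c)

/-!
The quantity `δ G^δ_s - θ G^θ_s` driving the two score vectors grows at most geometrically:
softmax moves by at most twice the sup-distance of its scores (in log-ratio, hence also in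
value on `(0, 1]`), so each round multiplies the discrepancy by `1 + 2R/√n` and adds `|δ - θ|`.
Up to the horizon `T_ε` the factor `(1 + 2R/√n)^t ≤ exp (2tR/√n)` stays below `1/(Kε)`, and the
resulting bound `|δ - θ| (1/(Kε) - 1)/R` is at most `L_ε |δ - θ|` because `-log x ≥ 1 - x`.
-/

open Finset Real

lemma sub_le_log_div {p q : ℝ} (hp : 0 < p) (hpq : p ≤ q) (hq : q ≤ 1) :
    q - p ≤ log (q / p) := by
  have hq₀ := hp.trans_le hpq
  calc q - p ≤ (q - p) / q := le_div_self (sub_nonneg.2 hpq) hq₀ hq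
    _ = 1 - (q / p)⁻¹ := by field_simp
    _ ≤ log (q / p) := one_sub_inv_le_log_of_pos (div_pos hq₀ hp)

lemma abs_sub_le_abs_log_div {p q : ℝ} (hp : 0 < p) (hp1 : p ≤ 1) (hq : 0 < q) (hq1 : q ≤ 1) :
    |q - p| ≤ |log (q / p)| := by
  rcases le_total p q with hpq | hqp
  · rw [abs_of_nonneg (sub_nonneg.2 hpq)]
    exact (sub_le_log_div hp hpq hq1).trans (le_abs_self _)
  · rw [abs_sub_comm, abs_of_nonneg (sub_nonneg.2 hqp), ← inv_div, log_inv, abs_neg]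
    exact (sub_le_log_div hq hqp hp1).trans (le_abs_self _)

lemma one_add_pow_le_of_mul_le_log {c y : ℝ} {s : ℕ} (hc : -1 ≤ c) (hy : 0 < y)
    (hs : s * c ≤ log y) : (1 + c) ^ s ≤ y :=
  calc (1 + c) ^ s ≤ exp c ^ s :=
        pow_le_pow_left₀ (by linarith) (by linarith [add_one_le_exp c]) s
    _ = exp (s * c) := (exp_nat_mul c s).symm
    _ ≤ y := by rwa [← exp_le_exp, exp_log hy] at hs

lemma log_sqrt_one_div_pos_iff {x : ℝ} : 0 < log √(1 / x) ↔ 0 < x ∧ x < 1 := by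
  rw [log_pos_iff (sqrt_nonneg _), lt_sqrt zero_le_one, one_pow, one_div, one_lt_inv_iff₀]

lemma one_div_sub_one_le {x ε : ℝ} (hx : 0 < x) (hx1 : x < 1) (hε : 0 < ε) (h2ε : 2 * ε ≤ x) :
    1 / x - 1 ≤ √2 / ε * (log √(1 / x) / √x) := by
  have hsx : 0 < √x := sqrt_pos.2 hx
  have hlog : (1 - x) / 2 ≤ log √(1 / x) := by
    rw [log_sqrt (by positivity), one_div, log_inv]
    linarith [log_le_sub_one_of_pos hx]
  have hscale : 1 ≤ √2 * x / (2 * ε * √x) := by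
    rw [one_le_div (by positivity)]
    calc 2 * ε * √x ≤ x * 1 := mul_le_mul h2ε (sqrt_le_one.2 hx1.le) hsx.le hx.le
      _ ≤ √2 * x := by nlinarith [one_lt_sqrt_two]
  calc 1 / x - 1 = (1 - x) / x := by field_simp
    _ ≤ √2 / ε * ((1 - x) / 2 / √x) := by
        rw [div_le_iff₀ hx, show √2 / ε * ((1 - x) / 2 / √x) * x =
          (1 - x) * (√2 * x / (2 * ε * √x)) by field_simp]
        exact le_mul_of_one_le_right (by linarith) hscale
    _ ≤ _ := by gcongr

lemma pos_of_one_le_floor_div {a R : ℝ} {t : ℕ} (hR : 0 ≤ R) (ht : 1 ≤ t)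
    (htT : t ≤ ⌊a / R⌋₊) : 0 < R ∧ 0 < a ∧ (t : ℝ) ≤ a / R := by
  have hta : (t : ℝ) ≤ a / R := (Nat.le_floor_iff' (by omega)).1 htT
  have hpos : 0 < a / R := lt_of_lt_of_le (by exact_mod_cast ht) hta
  rcases hR.eq_or_lt with rfl | hR
  · simp at hpos -- `a / 0 = 0`
  · exact ⟨hR, (div_pos_iff_of_pos_right hR).1 hpos, hta⟩

section Softmax

variable {ι : Type*} [Fintype ι] [Nonempty ι]

lemma sum_exp_pos (h : ι → ℝ) : 0 < ∑ b, exp (h b) :=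
  sum_pos (fun _ _ => exp_pos _) univ_nonempty

lemma softmax_pos (h : ι → ℝ) (a : ι) : 0 < softmax h a :=
  div_pos (exp_pos _) (sum_exp_pos h)

lemma softmax_le_one (h : ι → ℝ) (a : ι) : softmax h a ≤ 1 := by
  rw [softmax, div_le_one (sum_exp_pos h)]
  exact single_le_sum (fun b _ => (exp_pos (h b)).le) (mem_univ a)

lemma log_softmax (h : ι → ℝ) (a : ι) :
    log (softmax h a) = h a - log (∑ b, exp (h b)) := by
  rw [softmax, log_div (exp_ne_zero _) (sum_exp_pos h).ne', log_exp]

lemma log_sum_exp_le_add {h h' : ι → ℝ} {c : ℝ} (hc : ∀ b, h' b ≤ h b + c) :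
    log (∑ b, exp (h' b)) ≤ log (∑ b, exp (h b)) + c := by
  calc log (∑ b, exp (h' b)) ≤ log (∑ b, exp (h b + c)) :=
        log_le_log (sum_exp_pos h') (sum_le_sum fun b _ => exp_le_exp.mpr (hc b))
    _ = log (∑ b, exp (h b)) + c := by
        simp only [exp_add, ← sum_mul]
        rw [log_mul (sum_exp_pos h).ne' (exp_ne_zero c), log_exp]

lemma abs_log_softmax_div_le {h h' : ι → ℝ} {c : ℝ} (hc : ∀ b, |h' b - h b| ≤ c) (a : ι) :
    |log (softmax h' a / softmax h a)| ≤ 2 * c := by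
  have hc' b := abs_sub_le_iff.mp (hc b)
  have h₁ := log_sum_exp_le_add (h := h) (h' := h') fun b => by linarith [hc' b]
  have h₂ := log_sum_exp_le_add (h := h') (h' := h) fun b => by linarith [hc' b]
  rw [log_div (softmax_pos h' a).ne' (softmax_pos h a).ne', log_softmax, log_softmax, abs_le]
  constructor <;> linarith [hc' a]

lemma abs_softmax_sub_le {h h' : ι → ℝ} {c : ℝ} (hc : ∀ b, |h' b - h b| ≤ c) (a : ι) :
    |softmax h' a - softmax h a| ≤ 2 * c :=
  (abs_sub_le_abs_log_div (softmax_pos h a) (softmax_le_one h a) (softmax_pos h' a)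
    (softmax_le_one h' a)).trans (abs_log_softmax_div_le hc a)

end Softmax

section GradBandit

variable {n K : ℕ} {g : Fin K → ℕ → ℝ} {A : ℕ → Fin K} {θ δ : ℝ}

lemma abs_scores_sub_le {β : ℝ} {s : ℕ}
    (hβ : ∀ b, |δ * gradBanditG n K g A δ s b - θ * gradBanditG n K g A θ s b| ≤ β) (b : Fin K) :
    |-(δ / √n) * gradBanditG n K g A δ s b - -(θ / √n) * gradBanditG n K g A θ s b| ≤
      β / √n := by
  rw [show -(δ / √n) * gradBanditG n K g A δ s b - -(θ / √n) * gradBanditG n K g A θ s b =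
      -((δ * gradBanditG n K g A δ s b - θ * gradBanditG n K g A θ s b) / √n) by ring,
    abs_neg, abs_div, abs_of_nonneg (sqrt_nonneg _)]
  exact div_le_div_of_nonneg_right (hβ b) (sqrt_nonneg _)

lemma abs_mul_gradBanditG_sub_succ_le {R β : ℝ} {s : ℕ} (hg : ∀ a t, |g a t| ≤ 1)
    (hθ : |θ| ≤ R)
    (hβ : ∀ b, |δ * gradBanditG n K g A δ s b - θ * gradBanditG n K g A θ s b| ≤ β) (b : Fin K) :
    |δ * gradBanditG n K g A δ (s + 1) b - θ * gradBanditG n K g A θ (s + 1) b| ≤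
      (1 + 2 * R / √n) * β + |δ - θ| := by
  have : Nonempty (Fin K) := ⟨b⟩
  set πδ := softmax (fun c => -(δ / √n) * gradBanditG n K g A δ s c) b
  set πθ := softmax (fun c => -(θ / √n) * gradBanditG n K g A θ s c) b
  set e : ℝ := if A (s + 1) = b then 1 else 0
  set γ := g (A (s + 1)) (s + 1)
  have hsplit : δ * gradBanditG n K g A δ (s + 1) b - θ * gradBanditG n K g A θ (s + 1) b =
      (δ * gradBanditG n K g A δ s b - θ * gradBanditG n K g A θ s b) +
        ((δ - θ) * (e - πδ) + θ * (πθ - πδ)) * γ := by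
    simp only [gradBanditG]
    ring
  have he : |e - πδ| ≤ 1 := by
    have := softmax_pos (fun c => -(δ / √n) * gradBanditG n K g A δ s c) b
    have := softmax_le_one (fun c => -(δ / √n) * gradBanditG n K g A δ s c) b
    have : 0 ≤ e ∧ e ≤ 1 := by by_cases h : A (s + 1) = b <;> simp [e, h]
    rw [abs_le]
    constructor <;> linarith
  have hπ : |πθ - πδ| ≤ 2 * (β / √n) :=
    abs_softmax_sub_le (fun c => by rw [abs_sub_comm]; exact abs_scores_sub_le hβ c) b
  have hincr : |(δ - θ) * (e - πδ) + θ * (πθ - πδ)| ≤ |δ - θ| + R * (2 * (β / √n)) := by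
    refine (abs_add_le _ _).trans ?_
    rw [abs_mul, abs_mul]
    exact add_le_add (mul_le_of_le_one_right (abs_nonneg _) he)
      (mul_le_mul hθ hπ (abs_nonneg _) ((abs_nonneg θ).trans hθ))
  calc _ ≤ |δ * gradBanditG n K g A δ s b - θ * gradBanditG n K g A θ s b| +
        |(δ - θ) * (e - πδ) + θ * (πθ - πδ)| * |γ| := by
        rw [hsplit, ← abs_mul]
        exact abs_add_le _ _
    _ ≤ β + (|δ - θ| + R * (2 * (β / √n))) :=
        add_le_add (hβ b) ((mul_le_of_le_one_right (abs_nonneg _) (hg _ _)).trans hincr)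
    _ = (1 + 2 * R / √n) * β + |δ - θ| := by ring

lemma abs_mul_gradBanditG_sub_le {R : ℝ} (hg : ∀ a t, |g a t| ≤ 1) (hθ : |θ| ≤ R) (s : ℕ)
    (b : Fin K) :
    |δ * gradBanditG n K g A δ s b - θ * gradBanditG n K g A θ s b| ≤
      |δ - θ| * ∑ i ∈ range s, (1 + 2 * R / √n) ^ i := by
  induction s generalizing b with
  | zero => simp [gradBanditG]
  | succ s ih =>
    calc _ ≤ (1 + 2 * R / √n) * (|δ - θ| * ∑ i ∈ range s, (1 + 2 * R / √n) ^ i) + |δ - θ| :=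
          abs_mul_gradBanditG_sub_succ_le hg hθ ih b
      _ = _ := by rw [geom_sum_succ]; ring

lemma abs_log_gradBanditPi_div_le {R : ℝ} (hn : 0 < n) (hR : 0 < R) (hg : ∀ a t, |g a t| ≤ 1)
    (hθ : |θ| ≤ R) (s : ℕ) (a : Fin K) :
    |log (gradBanditPi n K g A δ (s + 1) a / gradBanditPi n K g A θ (s + 1) a)| ≤
      |δ - θ| / R * ((1 + 2 * R / √n) ^ s - 1) := by
  have : Nonempty (Fin K) := ⟨a⟩
  have hsn : 0 < √(n : ℝ) := sqrt_pos.2 (Nat.cast_pos.2 hn)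
  calc _ ≤ 2 * ((|δ - θ| * ∑ i ∈ range s, (1 + 2 * R / √n) ^ i) / √n) :=
        abs_log_softmax_div_le (abs_scores_sub_le (abs_mul_gradBanditG_sub_le hg hθ s)) a
    _ = |δ - θ| / R * ((∑ i ∈ range s, (1 + 2 * R / √n) ^ i) * (1 + 2 * R / √n - 1)) := by
        field_simp
        ring
    _ = _ := by rw [geom_sum_mul]

end GradBandit

theorem gradBandit_lipschitz_general (n K : ℕ) (hK : 2 ≤ K)
    (g : Fin K → ℕ → ℝ) (hg : ∀ a t, g a t ∈ Set.Icc (0 : ℝ) 1)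
    (A : ℕ → Fin K) (ε R : ℝ)
    (Tε : ℕ)
    (hTε : Tε = min ⌊Real.log (Real.sqrt (1 / (K * ε))) * Real.sqrt n / R⌋₊ n)
    (Lε : ℝ)
    (hLε : Lε = Real.sqrt 2 / (R * ε) *
      (Real.log (Real.sqrt (1 / (K * ε))) / Real.sqrt (K * ε))) :
    ∀ θ δ : ℝ, θ ∈ Set.Icc 0 R → δ ∈ Set.Icc 0 R →
      ∀ t, 1 ≤ t → t ≤ Tε → ∀ a,
        |Real.log (gradBanditPi n K g A δ t a / gradBanditPi n K g A θ t a)| ≤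
          Lε * |δ - θ| := by
  intro θ δ hθ _ t ht htT a
  set x : ℝ := K * ε
  set M := log √(1 / x)
  have hn : 0 < n := ht.trans (htT.trans (hTε ▸ min_le_right _ _))
  have hsn : 0 < √(n : ℝ) := sqrt_pos.2 (Nat.cast_pos.2 hn)
  obtain ⟨hR, hMn, htM⟩ :=
    pos_of_one_le_floor_div (hθ.1.trans hθ.2) ht (htT.trans (hTε ▸ min_le_left _ _))
  obtain ⟨hx, hx1⟩ := log_sqrt_one_div_pos_iff.1 (pos_of_mul_pos_left hMn hsn.le)
  have hε : 0 < ε := pos_of_mul_pos_right hx (Nat.cast_nonneg K)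
  obtain ⟨s, rfl⟩ : ∃ s, t = s + 1 := ⟨t - 1, by omega⟩
  have hpow : (1 + 2 * R / √n) ^ s ≤ 1 / x := by
    refine one_add_pow_le_of_mul_le_log (by linarith [div_pos (mul_pos two_pos hR) hsn])
      (by positivity) ?_
    calc (s : ℝ) * (2 * R / √n) ≤ M * √n / R * (2 * R / √n) := by
          gcongr
          push_cast at htM
          linarith
      _ = log (1 / x) := by
          rw [show M = log (1 / x) / 2 from log_sqrt (by positivity)]
          field_simp
  have hg' a t : |g a t| ≤ 1 := abs_le.2 ⟨by linarith [(hg a t).1], (hg a t).2⟩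
  calc _ ≤ |δ - θ| / R * ((1 + 2 * R / √n) ^ s - 1) :=
        abs_log_gradBanditPi_div_le hn hR hg' (abs_le.2 ⟨by linarith [hθ.1], hθ.2⟩) s a
    _ ≤ |δ - θ| / R * (1 / x - 1) := by gcongr
    _ ≤ |δ - θ| / R * (√2 / ε * (M / √x)) := by
        gcongr
        exact one_div_sub_one_le hx hx1 hε
          (mul_le_mul_of_nonneg_right (Nat.ofNat_le_cast.2 hK) hε.le)
    _ = Lε * |δ - θ| := by rw [hLε]; ring

/-- Lipschitz parameterization of `Gradient Bandit`. For `ε ∈ (0, 1)`,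
`T_ε = min(⌊log(√(1/(Kε))) √n / R⌋, n)` and
`L_ε = (√2/(Rε)) log(√(1/(Kε)))/√(Kε)`, for all parameters `θ, δ ∈ [0, R]` and all
`1 ≤ t ≤ T_ε`, `sup_a |log(π_t^δ(a)/π_t^θ(a))| ≤ L_ε |δ − θ|`. -/
theorem gradBandit_lipschitz (n K : ℕ) (hn : 1 ≤ n) (hK : 2 ≤ K)
    (g : Fin K → ℕ → ℝ) (hg : ∀ a t, g a t ∈ Set.Icc (0 : ℝ) 1)
    (A : ℕ → Fin K) (ε R : ℝ) (hε : 0 < ε) (hε1 : ε < 1) (hR : 0 < R)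
    (Tε : ℕ)
    (hTε : Tε = min ⌊Real.log (Real.sqrt (1 / (K * ε))) * Real.sqrt n / R⌋₊ n)
    (Lε : ℝ)
    (hLε : Lε = Real.sqrt 2 / (R * ε) *
      (Real.log (Real.sqrt (1 / (K * ε))) / Real.sqrt (K * ε))) :
    ∀ θ δ : ℝ, θ ∈ Set.Icc 0 R → δ ∈ Set.Icc 0 R →
      ∀ t, 1 ≤ t → t ≤ Tε → ∀ a,
        |Real.log (gradBanditPi n K g A δ t a / gradBanditPi n K g A θ t a)| ≤
          Lε * |δ - θ| :=
  gradBandit_lipschitz_general n K hK g hg A ε R Tε hTε Lε hLε
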